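/- arXiv:2103.05566 — 5 statements merged into one kernel-verified Lean document; each statement's English description precedes it below -/
import Mathlib

section
/- Let H : ℝ² → ℝ be C² and h ∈ ℝ. Suppose Q, P : ℝ² → ℝ are differentiable and satisfy the symplectic Euler scheme equations Q(q,p) = q + h·∂H/∂p(Q(q,p), p) and P(q,p) = p − h·∂H/∂q(Q(q,p), p) for all (q,p). Then at every point (q,p) where 1 − h·∂²H/∂q∂p(Q(q,p), p) ≠ 0, the Jacobian determinant of the map (q,p) ↦ (Q(q,p), P(q,p)) equals 1; i.e., the symplectic Euler scheme preserves the canonical two-form dq ∧ dp. -/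
/-! Differentiating the two implicit equations of the scheme at `z`, with `y = (Q z, z.2)`,
`a = ∂Q/∂q` and `b = ∂Q/∂p`, gives `a = 1 + h a H_qp(y)`, `∂P/∂q = -h a H_qq(y)` and
`∂P/∂p = 1 - h (b H_qq(y) + H_pq(y))`. The terms in `b` cancel in the Jacobian determinant,
leaving `a (1 - h H_pq(y))`, which equals `a (1 - h H_qp(y)) = 1` by the symmetry of the
second derivative of `H`. -/

noncomputable section

/-- `∂H/∂q` at a point of the plane. -/
def Hq (H : ℝ × ℝ → ℝ) (z : ℝ × ℝ) : ℝ := fderiv ℝ H z (1, 0)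

/-- `∂H/∂p` at a point of the plane. -/
def Hp (H : ℝ × ℝ → ℝ) (z : ℝ × ℝ) : ℝ := fderiv ℝ H z (0, 1)

/-- `∂²H/∂q∂p` at a point of the plane. -/
def Hqp (H : ℝ × ℝ → ℝ) (z : ℝ × ℝ) : ℝ :=
  fderiv ℝ (fun w => fderiv ℝ H w (0, 1)) z (1, 0)

/-- The Jacobian determinant of the map `(q,p) ↦ (Q(q,p), P(q,p))`. -/
def jacDet (Q P : ℝ × ℝ → ℝ) (z : ℝ × ℝ) : ℝ :=
  fderiv ℝ Q z (1, 0) * fderiv ℝ P z (0, 1) - fderiv ℝ Q z (0, 1) * fderiv ℝ P z (1, 0)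

open ContinuousLinearMap

theorem HasFDerivAt.clm_apply_const {𝕜 E F G : Type*} [NontriviallyNormedField 𝕜]
    [NormedAddCommGroup E] [NormedSpace 𝕜 E] [NormedAddCommGroup F] [NormedSpace 𝕜 F]
    [NormedAddCommGroup G] [NormedSpace 𝕜 G] {c : E → F →L[𝕜] G} {c' : E →L[𝕜] F →L[𝕜] G}
    {x : E} (hc : HasFDerivAt c c' x) (v : F) :
    HasFDerivAt (fun y => c y v) (c'.flip v) x := by
  simpa using hc.clm_apply (hasFDerivAt_const v x)

theorem fderiv_apply_of_forall_eq_add_mul_comp {F Q G : ℝ × ℝ → ℝ} {G' : ℝ × ℝ →L[ℝ] ℝ}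
    (ℓ : ℝ × ℝ →L[ℝ] ℝ) (c : ℝ) (hF : ∀ w, F w = ℓ w + c * G (Q w, w.2)) {z : ℝ × ℝ}
    (hQ : DifferentiableAt ℝ Q z) (hG : HasFDerivAt G G' (Q z, z.2)) (v : ℝ × ℝ) :
    fderiv ℝ F z v = ℓ v + c * G' (fderiv ℝ Q z v, v.2) := by
  have hgraph : HasFDerivAt (fun w : ℝ × ℝ => (Q w, w.2)) ((fderiv ℝ Q z).prod (snd ℝ ℝ ℝ)) z :=
    hQ.hasFDerivAt.prodMk hasFDerivAt_snd
  have hFd : HasFDerivAt F (ℓ + c • G'.comp ((fderiv ℝ Q z).prod (snd ℝ ℝ ℝ))) z := by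
    rw [show F = _ from funext hF]
    exact ℓ.hasFDerivAt.add ((hG.comp z hgraph).const_mul c)
  simp [hFd.fderiv]

theorem det_eq_one_of_symplecticEuler_linearization (B : ℝ × ℝ →L[ℝ] ℝ × ℝ →L[ℝ] ℝ)
    (hB : B (1, 0) (0, 1) = B (0, 1) (1, 0)) (h : ℝ) (L M : ℝ × ℝ →L[ℝ] ℝ)
    (hL : ∀ v, L v = v.1 + h * B (L v, v.2) (0, 1))
    (hM : ∀ v, M v = v.2 - h * B (L v, v.2) (1, 0)) :
    L (1, 0) * M (0, 1) - L (0, 1) * M (1, 0) = 1 := by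
  have hB_expand : ∀ s t w, B (s, t) w = s * B (1, 0) w + t * B (0, 1) w := by
    intro s t w
    have hst : ((s, t) : ℝ × ℝ) = s • (1, 0) + t • (0, 1) := by ext <;> simp
    rw [hst, map_add, map_smul, map_smul]
    simp
  have e₁ := hL (1, 0)
  have e₂ := hM (1, 0)
  have e₃ := hM (0, 1)
  rw [hB_expand] at e₁ e₂ e₃
  rw [e₂, e₃]
  linear_combination e₁ + h * L (1, 0) * hB

theorem symplectic_euler_preserves_canonical_two_form_general
    (H : ℝ × ℝ → ℝ) (hH : ContDiff ℝ 2 H) (h : ℝ)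
    (Q P : ℝ × ℝ → ℝ) (hQd : Differentiable ℝ Q)
    (hQ : ∀ z : ℝ × ℝ, Q z = z.1 + h * Hp H (Q z, z.2))
    (hP : ∀ z : ℝ × ℝ, P z = z.2 - h * Hq H (Q z, z.2)) :
    ∀ z : ℝ × ℝ, 1 - h * Hqp H (Q z, z.2) ≠ 0 → jacDet Q P z = 1 := by
  intro z _
  set y : ℝ × ℝ := (Q z, z.2)
  have hD2 : HasFDerivAt (fderiv ℝ H) (fderiv ℝ (fderiv ℝ H) y) y :=
    ((hH.fderiv_right (m := 1) (by norm_num)).differentiable one_ne_zero y).hasFDerivAt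
  have hsymm : fderiv ℝ (fderiv ℝ H) y (1, 0) (0, 1) = fderiv ℝ (fderiv ℝ H) y (0, 1) (1, 0) :=
    hH.contDiffAt.isSymmSndFDerivAt (by simp) _ _
  refine det_eq_one_of_symplecticEuler_linearization _ hsymm h _ _ (fun v => ?_) (fun v => ?_)
  · exact fderiv_apply_of_forall_eq_add_mul_comp (fst ℝ ℝ ℝ) h hQ (hQd z)
      (hD2.clm_apply_const (0, 1)) v
  · rw [fderiv_apply_of_forall_eq_add_mul_comp (snd ℝ ℝ ℝ) (-h)
      (fun w => by simp only [hP, Hq, coe_snd', neg_mul, sub_eq_add_neg]) (hQd z)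
      (hD2.clm_apply_const (1, 0)) v]
    simp only [coe_snd', flip_apply, neg_mul, sub_eq_add_neg]

theorem symplectic_euler_preserves_canonical_two_form
    (H : ℝ × ℝ → ℝ) (hH : ContDiff ℝ 2 H) (h : ℝ)
    (Q P : ℝ × ℝ → ℝ) (hQd : Differentiable ℝ Q) (hPd : Differentiable ℝ P)
    (hQ : ∀ z : ℝ × ℝ, Q z = z.1 + h * Hp H (Q z, z.2))
    (hP : ∀ z : ℝ × ℝ, P z = z.2 - h * Hq H (Q z, z.2)) :
    ∀ z : ℝ × ℝ, 1 - h * Hqp H (Q z, z.2) ≠ 0 → jacDet Q P z = 1 :=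
  symplectic_euler_preserves_canonical_two_form_general H hH h Q P hQd hQ hP
end
end

section
/- Let H : ℝ² → ℝ be C² and h ∈ ℝ. Suppose Q, P : ℝ² → ℝ are differentiable and satisfy the modified symplectic Euler scheme equations Q(q,p) = q + h·∂H/∂p(q,p) and P(q,p) = p − h·∂H/∂q(Q(q,p), P(q,p)) for all (q,p). Then at every point (q,p) where 1 + h·∂²H/∂q∂p(Q(q,p), P(q,p)) ≠ 0, one has (1 + h·∂²H/∂q∂p(Q(q,p),P(q,p)))·det D(Q,P)(q,p) = 1 + h·∂²H/∂q∂p(q,p), where det D(Q,P) is the Jacobian determinant of (q,p) ↦ (Q,P); i.e., the scheme preserves the h-dependent two-form (1 + h·∂²H/∂q∂p(q,p)) dq ∧ dp. -/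
noncomputable section

/-! Differentiating `P = p - h ∂H/∂q(Q, P)` gives
`(1 + h ∂²H/∂q∂p(Q,P)) dP = dp - h ∂²H/∂q²(Q,P) dQ`, so wedging with `dQ` yields
`(1 + h ∂²H/∂q∂p(Q,P)) dQ ∧ dP = dQ ∧ dp`. Since `Q = q + h ∂H/∂p`, the right side is
`(1 + h ∂²H/∂p∂q) dq ∧ dp`, and the mixed partials agree by Schwarz's theorem. -/

lemma ContinuousLinearMap.map_pair {R M : Type*} [Semiring R] [TopologicalSpace R]
    [AddCommMonoid M] [Module R M] [TopologicalSpace M] (L : R × R →L[R] M) (a b : R) :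
    L (a, b) = a • L (1, 0) + b • L (0, 1) := by
  rw [← map_smul, ← map_smul, ← map_add]
  simp

lemma fderiv_fderiv_apply_const {𝕜 E F : Type*} [NontriviallyNormedField 𝕜]
    [NormedAddCommGroup E] [NormedSpace 𝕜 E] [NormedAddCommGroup F] [NormedSpace 𝕜 F]
    {f : E → F} {z : E} (hf : DifferentiableAt 𝕜 (fderiv 𝕜 f) z) (u v : E) :
    fderiv 𝕜 (fun w => fderiv 𝕜 f w u) z v = fderiv 𝕜 (fderiv 𝕜 f) z v u := by
  rw [fderiv_clm_apply hf (differentiableAt_const u)]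
  simp

section PartialDerivatives

variable {H : ℝ × ℝ → ℝ}

lemma differentiable_fderiv_of_contDiff_two (hH : ContDiff ℝ 2 H) :
    Differentiable ℝ (fderiv ℝ H) :=
  (hH.fderiv_right (m := 1) (by norm_num)).differentiable one_ne_zero

lemma differentiable_Hp (hH : ContDiff ℝ 2 H) : Differentiable ℝ (Hp H) := fun z =>
  (differentiable_fderiv_of_contDiff_two hH z).clm_apply (differentiableAt_const _)

lemma differentiable_Hq (hH : ContDiff ℝ 2 H) : Differentiable ℝ (Hq H) := fun z =>
  (differentiable_fderiv_of_contDiff_two hH z).clm_apply (differentiableAt_const _)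

lemma fderiv_Hq_apply_snd (hH : ContDiff ℝ 2 H) (z : ℝ × ℝ) :
    fderiv ℝ (Hq H) z (0, 1) = Hqp H z := by
  have hD := differentiable_fderiv_of_contDiff_two hH z
  unfold Hq Hqp
  rw [fderiv_fderiv_apply_const hD, fderiv_fderiv_apply_const hD]
  exact (hH.contDiffAt.isSymmSndFDerivAt (by simp)) _ _

lemma fderiv_Hq_apply (hH : ContDiff ℝ 2 H) (z : ℝ × ℝ) (a b : ℝ) :
    fderiv ℝ (Hq H) z (a, b) = a * fderiv ℝ (Hq H) z (1, 0) + b * Hqp H z := by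
  rw [ContinuousLinearMap.map_pair, fderiv_Hq_apply_snd hH, smul_eq_mul, smul_eq_mul]

end PartialDerivatives

theorem modified_symplectic_euler_preserves_two_form_general
    (H : ℝ × ℝ → ℝ) (hH : ContDiff ℝ 2 H) (h : ℝ)
    (Q P : ℝ × ℝ → ℝ) (hPd : Differentiable ℝ P)
    (hQ : ∀ z : ℝ × ℝ, Q z = z.1 + h * Hp H z)
    (hP : ∀ z : ℝ × ℝ, P z = z.2 - h * Hq H (Q z, P z)) :
    ∀ z : ℝ × ℝ, 1 + h * Hqp H (Q z, P z) ≠ 0 →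
      (1 + h * Hqp H (Q z, P z)) * jacDet Q P z = 1 + h * Hqp H z := by
  intro z _
  set w := (Q z, P z)
  set DQ := ContinuousLinearMap.fst ℝ ℝ ℝ + h • fderiv ℝ (Hp H) z
  have hDQ : HasFDerivAt Q DQ z := by
    rw [funext hQ]
    exact hasFDerivAt_fst.add ((differentiable_Hp hH z).hasFDerivAt.const_mul h)
  have hDP : HasFDerivAt P (ContinuousLinearMap.snd ℝ ℝ ℝ -
      h • (fderiv ℝ (Hq H) w).comp (DQ.prod (fderiv ℝ P z))) z :=
    (hasFDerivAt_snd.sub (((differentiable_Hq hH w).hasFDerivAt.comp z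
      (hDQ.prodMk (hPd z).hasFDerivAt)).const_mul h)).congr_of_eventuallyEq (.of_forall hP)
  have hDP_apply (v : ℝ × ℝ) :
      fderiv ℝ P z v = v.2 - h * fderiv ℝ (Hq H) w (DQ v, fderiv ℝ P z v) := by
    conv_lhs => rw [hDP.fderiv]
    rfl
  have hPq := hDP_apply (1, 0)
  have hPp := hDP_apply (0, 1)
  rw [fderiv_Hq_apply hH] at hPq hPp
  have hDQq : DQ (1, 0) = 1 + h * Hqp H z := rfl
  rw [jacDet, hDQ.fderiv]
  linear_combination DQ (1, 0) * hPp - DQ (0, 1) * hPq + hDQq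

theorem modified_symplectic_euler_preserves_two_form
    (H : ℝ × ℝ → ℝ) (hH : ContDiff ℝ 2 H) (h : ℝ)
    (Q P : ℝ × ℝ → ℝ) (hQd : Differentiable ℝ Q) (hPd : Differentiable ℝ P)
    (hQ : ∀ z : ℝ × ℝ, Q z = z.1 + h * Hp H z)
    (hP : ∀ z : ℝ × ℝ, P z = z.2 - h * Hq H (Q z, P z)) :
    ∀ z : ℝ × ℝ, 1 + h * Hqp H (Q z, P z) ≠ 0 →
      (1 + h * Hqp H (Q z, P z)) * jacDet Q P z = 1 + h * Hqp H z :=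
  modified_symplectic_euler_preserves_two_form_general H hH h Q P hPd hQ hP
end
end

section
/- Let H : ℝ² → ℝ be C² and h ∈ ℝ. Suppose Q, P : ℝ² → ℝ are differentiable and satisfy the adjoint modified symplectic Euler scheme equations P(q,p) = p − h·∂H/∂q(q,p) and Q(q,p) = q + h·∂H/∂p(Q(q,p), P(q,p)) for all (q,p). Then at every point (q,p) where 1 − h·∂²H/∂q∂p(Q(q,p), P(q,p)) ≠ 0, one has (1 − h·∂²H/∂q∂p(Q(q,p),P(q,p)))·det D(Q,P)(q,p) = 1 − h·∂²H/∂q∂p(q,p); i.e., the adjoint scheme preserves the h-dependent two-form (1 − h·∂²H/∂q∂p(q,p)) dq ∧ dp. -/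
noncomputable section

/-! Differentiating `P = p - h ∂H/∂q` in `p` and using the symmetry of mixed partials gives
`∂P/∂p = 1 - h ∂²H/∂q∂p (q,p)`. Differentiating the implicit equation `Q - h ∂H/∂p (Q,P) = q`
gives `(1 - h ∂²H/∂q∂p (Q,P)) DQ = dq + h ∂²H/∂p² (Q,P) DP`. Substituting this for the first row
of the Jacobian matrix, scaled by `1 - h ∂²H/∂q∂p (Q,P)`, the `∂²H/∂p²` terms cancel in the
determinant and only `∂P/∂p` survives. -/

section SecondDerivative

variable {𝕜 E F : Type*} [RCLike 𝕜] [NormedAddCommGroup E] [NormedSpace 𝕜 E]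
  [NormedAddCommGroup F] [NormedSpace 𝕜 F] {f : E → F}

theorem ContDiff.differentiable_fderiv_apply (hf : ContDiff 𝕜 2 f) (v : E) :
    Differentiable 𝕜 (fun w => fderiv 𝕜 f w v) := fun w =>
  ((hf.fderiv_right (m := 1) le_rfl).differentiable one_ne_zero w).clm_apply
    (differentiableAt_const v)

theorem ContDiff.fderiv_fderiv_apply_comm (hf : ContDiff 𝕜 2 f) (x u v : E) :
    fderiv 𝕜 (fun w => fderiv 𝕜 f w v) x u = fderiv 𝕜 (fun w => fderiv 𝕜 f w u) x v := by
  have hf' : DifferentiableAt 𝕜 (fderiv 𝕜 f) x :=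
    (hf.fderiv_right (m := 1) le_rfl).differentiable one_ne_zero x
  simp only [fderiv_clm_apply hf' (differentiableAt_const _), fderiv_fun_const, Pi.zero_apply,
    ContinuousLinearMap.comp_zero, zero_add, ContinuousLinearMap.flip_apply]
  exact hf.contDiffAt.isSymmSndFDerivAt (by simp [minSmoothness_of_isRCLikeNormedField]) u v

end SecondDerivative

theorem ContinuousLinearMap.map_prod_mk {R M : Type*} [Semiring R] [TopologicalSpace R]
    [AddCommMonoid M] [TopologicalSpace M] [Module R M] (L : R × R →L[R] M) (x y : R) :
    L (x, y) = x • L (1, 0) + y • L (0, 1) := by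
  rw [← L.map_smul, ← L.map_smul, ← L.map_add]
  simp

theorem Hqp_eq_fderiv_Hp (H : ℝ × ℝ → ℝ) (z : ℝ × ℝ) :
    Hqp H z = fderiv ℝ (Hp H) z (1, 0) :=
  rfl

theorem Hqp_eq_fderiv_Hq {H : ℝ × ℝ → ℝ} (hH : ContDiff ℝ 2 H) (z : ℝ × ℝ) :
    Hqp H z = fderiv ℝ (Hq H) z (0, 1) :=
  hH.fderiv_fderiv_apply_comm z (1, 0) (0, 1)

theorem fderiv_snd_of_eq_snd_sub_Hq {H P : ℝ × ℝ → ℝ} (hH : ContDiff ℝ 2 H) {h : ℝ}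
    (hP : ∀ z, P z = z.2 - h * Hq H z) (z : ℝ × ℝ) :
    fderiv ℝ P z (0, 1) = 1 - h * Hqp H z := by
  have hHq : DifferentiableAt ℝ (Hq H) z := hH.differentiable_fderiv_apply (1, 0) z
  rw [funext hP, fderiv_fun_sub differentiableAt_snd (hHq.const_mul h),
    fderiv_const_mul hHq, Hqp_eq_fderiv_Hq hH]
  simp [fderiv_snd]

theorem fderiv_of_eq_fst_add_Hp_comp {H Q P : ℝ × ℝ → ℝ} {h : ℝ} {z : ℝ × ℝ}
    (hHp : DifferentiableAt ℝ (Hp H) (Q z, P z)) (hQd : DifferentiableAt ℝ Q z)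
    (hPd : DifferentiableAt ℝ P z) (hQ : ∀ z, Q z = z.1 + h * Hp H (Q z, P z)) (u : ℝ × ℝ) :
    (1 - h * Hqp H (Q z, P z)) * fderiv ℝ Q z u
      - h * fderiv ℝ (Hp H) (Q z, P z) (0, 1) * fderiv ℝ P z u = u.1 := by
  have hfst : HasFDerivAt Prod.fst (fderiv ℝ Q z
      - h • (fderiv ℝ (Hp H) (Q z, P z)).comp ((fderiv ℝ Q z).prod (fderiv ℝ P z))) z :=
    (hQd.hasFDerivAt.sub ((hHp.hasFDerivAt.comp z
      (hQd.hasFDerivAt.prodMk hPd.hasFDerivAt)).const_mul h)).congr_of_eventuallyEq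
      (.of_forall fun w => by simp only [Pi.sub_apply, Function.comp_apply]; linarith [hQ w])
  have := congrArg (· u) (hasFDerivAt_fst.unique hfst)
  simp only [ContinuousLinearMap.coe_fst', sub_apply, smul_apply, ContinuousLinearMap.comp_apply,
    ContinuousLinearMap.prod_apply, smul_eq_mul] at this
  rw [(fderiv ℝ (Hp H) (Q z, P z)).map_prod_mk, smul_eq_mul, smul_eq_mul] at this
  rw [Hqp_eq_fderiv_Hp]
  linear_combination -this

theorem adjoint_modified_symplectic_euler_preserves_two_form
    (H : ℝ × ℝ → ℝ) (hH : ContDiff ℝ 2 H) (h : ℝ)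
    (Q P : ℝ × ℝ → ℝ) (hQd : Differentiable ℝ Q) (hPd : Differentiable ℝ P)
    (hP : ∀ z : ℝ × ℝ, P z = z.2 - h * Hq H z)
    (hQ : ∀ z : ℝ × ℝ, Q z = z.1 + h * Hp H (Q z, P z)) :
    ∀ z : ℝ × ℝ, 1 - h * Hqp H (Q z, P z) ≠ 0 →
      (1 - h * Hqp H (Q z, P z)) * jacDet Q P z = 1 - h * Hqp H z := by
  intro z _
  have hDQ := fderiv_of_eq_fst_add_Hp_comp (hH.differentiable_fderiv_apply (0, 1) _)
    (hQd z) (hPd z) hQ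
  have hDQ_q := hDQ (1, 0)
  have hDQ_p := hDQ (0, 1)
  rw [jacDet, ← fderiv_snd_of_eq_snd_sub_Hq hH hP z]
  linear_combination fderiv ℝ P z (0, 1) * hDQ_q - fderiv ℝ P z (1, 0) * hDQ_p
end
end

section
/- Let H : ℝ² → ℝ and ρ : ℝ² → ℝ be C¹ with ρ(q,p) > 0 for all (q,p), and define the extended phase space Hamiltonian K(q,p,w,π) = (H(q,p) + π)/ρ(q,p) on ℝ⁴. Suppose (q,p,w,π) : I → ℝ⁴ is a differentiable curve on an interval I containing 0 that satisfies the canonical Hamilton equations of K for the conjugate pairs (q,p) and (w,π): q′ = ∂K/∂p, p′ = −∂K/∂q, w′ = ∂K/∂π, π′ = −∂K/∂w. Then: (i) π is constant along the curve; (ii) w′(ζ) = 1/ρ(q(ζ),p(ζ)) for all ζ ∈ I (so the prescribed time-step condition ρ dt = dζ is satisfied with t = w); and (iii) if H(q(0),p(0)) + π(0) = 0, then H(q(ζ),p(ζ)) + π(ζ) = 0 for all ζ ∈ I. -/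
/-!
Since `K` does not depend on `w`, the equation for `π` gives `π′ = 0`, and the equation for `w`
gives `w′ = ∂K/∂π = 1/ρ`. With `π ≡ π 0` frozen, `(q, p)` follows the planar Hamiltonian flow of
`G = (H + π 0)/ρ`, so `G(q, p)` is conserved; as `ρ > 0`, `H + π` vanishes along the curve as soon
as it vanishes at `ζ = 0`.
-/

section

variable {F : Type*} [NormedAddCommGroup F] [NormedSpace ℝ F]

theorem Convex.eq_of_hasDerivAt_zero {I : Set ℝ} (hI : Convex ℝ I) {f : ℝ → F}
    (hf : ∀ t ∈ I, HasDerivAt f 0 t) {a b : ℝ} (ha : a ∈ I) (hb : b ∈ I) : f b = f a := by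
  have h := hI.norm_image_sub_le_of_norm_hasDerivWithin_le (C := 0)
    (fun t ht => (hf t ht).hasDerivWithinAt) (fun _ _ => by simp) ha hb
  rwa [zero_mul, norm_le_zero_iff, sub_eq_zero] at h

theorem HasFDerivAt.hasDerivAt_fst_section {G : ℝ × ℝ → F} {L : ℝ × ℝ →L[ℝ] F} {x y : ℝ}
    (hG : HasFDerivAt G L (x, y)) : HasDerivAt (fun x' => G (x', y)) (L (1, 0)) x :=
  hG.comp_hasDerivAt x ((hasDerivAt_id x).prodMk (hasDerivAt_const x y))

theorem HasFDerivAt.hasDerivAt_snd_section {G : ℝ × ℝ → F} {L : ℝ × ℝ →L[ℝ] F} {x y : ℝ}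
    (hG : HasFDerivAt G L (x, y)) : HasDerivAt (fun y' => G (x, y')) (L (0, 1)) y :=
  hG.comp_hasDerivAt y ((hasDerivAt_const y x).prodMk (hasDerivAt_id y))

theorem ContinuousLinearMap.apply_prod_eq (L : ℝ × ℝ →L[ℝ] F) (u v : ℝ) :
    L (u, v) = u • L (1, 0) + v • L (0, 1) := by
  have h : ((u, v) : ℝ × ℝ) = u • ((1 : ℝ), (0 : ℝ)) + v • ((0 : ℝ), (1 : ℝ)) := by
    simp
  rw [h, map_add, map_smul, map_smul]

end

theorem hasDerivAt_comp_eq_zero_of_hamiltonian_flow {G : ℝ × ℝ → ℝ} {q p : ℝ → ℝ} {t : ℝ}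
    (hG : DifferentiableAt ℝ G (q t, p t))
    (hq : HasDerivAt q (deriv (fun p' => G (q t, p')) (p t)) t)
    (hp : HasDerivAt p (-deriv (fun q' => G (q', p t)) (q t)) t) :
    HasDerivAt (fun s => G (q s, p s)) 0 t := by
  have hG' := hG.hasFDerivAt
  rw [hG'.hasDerivAt_snd_section.deriv] at hq
  rw [hG'.hasDerivAt_fst_section.deriv] at hp
  refine (hG'.comp_hasDerivAt t (hq.prodMk hp)).congr_deriv ?_
  rw [ContinuousLinearMap.apply_prod_eq, smul_eq_mul, smul_eq_mul]
  ring

theorem extended_phase_space_hamiltonian_properties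
    (H ρ : ℝ × ℝ → ℝ) (hH : ContDiff ℝ 1 H) (hρ : ContDiff ℝ 1 ρ)
    (hρpos : ∀ z : ℝ × ℝ, 0 < ρ z)
    -- the extended phase space Hamiltonian K(q,p,w,π) = (H(q,p) + π)/ρ(q,p)
    (K : ℝ → ℝ → ℝ → ℝ → ℝ)
    (hK : ∀ q p w π : ℝ, K q p w π = (H (q, p) + π) / ρ (q, p))
    -- an interval I containing 0
    (I : Set ℝ) (hI : Convex ℝ I) (h0I : (0 : ℝ) ∈ I)
    -- a differentiable curve satisfying the canonical Hamilton equations of K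
    (q p w π : ℝ → ℝ)
    (hq : ∀ ζ ∈ I, HasDerivAt q (deriv (fun p' => K (q ζ) p' (w ζ) (π ζ)) (p ζ)) ζ)
    (hp : ∀ ζ ∈ I, HasDerivAt p (-deriv (fun q' => K q' (p ζ) (w ζ) (π ζ)) (q ζ)) ζ)
    (hw : ∀ ζ ∈ I, HasDerivAt w (deriv (fun π' => K (q ζ) (p ζ) (w ζ) π') (π ζ)) ζ)
    (hπ : ∀ ζ ∈ I, HasDerivAt π (-deriv (fun w' => K (q ζ) (p ζ) w' (π ζ)) (w ζ)) ζ) :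
    -- (i) π is constant along the curve
    (∀ ζ ∈ I, π ζ = π 0)
    -- (ii) the prescribed time-step condition holds: w′ = 1/ρ(q,p)
    ∧ (∀ ζ ∈ I, HasDerivAt w (1 / ρ (q ζ, p ζ)) ζ)
    -- (iii) H + π is conserved if it vanishes initially
    ∧ (H (q 0, p 0) + π 0 = 0 → ∀ ζ ∈ I, H (q ζ, p ζ) + π ζ = 0) := by
  have hπ_const : ∀ ζ ∈ I, π ζ = π 0 := by
    refine fun ζ hζ => hI.eq_of_hasDerivAt_zero (fun t ht => ?_) h0I hζ
    simpa only [hK, deriv_const, neg_zero] using hπ t ht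
  refine ⟨hπ_const, fun ζ hζ => ?_, fun h_init ζ hζ => ?_⟩
  · have hK_π : HasDerivAt (fun π' => (H (q ζ, p ζ) + π') / ρ (q ζ, p ζ))
        (1 / ρ (q ζ, p ζ)) (π ζ) := ((hasDerivAt_id _).const_add _).div_const _
    simpa only [hK, hK_π.deriv] using hw ζ hζ
  · set G : ℝ × ℝ → ℝ := fun z => (H z + π 0) / ρ z
    have hG : Differentiable ℝ G := fun z => by
      simp only [G, div_eq_mul_inv]
      exact ((hH.differentiable one_ne_zero z).add_const _).fun_mul
        ((hρ.differentiable one_ne_zero z).inv (hρpos z).ne')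
    have hG_flow : ∀ t ∈ I, HasDerivAt (fun s => G (q s, p s)) 0 t := fun t ht =>
      hasDerivAt_comp_eq_zero_of_hamiltonian_flow (hG _)
        (by simpa only [hK, hπ_const t ht] using hq t ht)
        (by simpa only [hK, hπ_const t ht] using hp t ht)
    have hG_zero : G (q ζ, p ζ) = 0 := by
      rw [hI.eq_of_hasDerivAt_zero hG_flow h0I hζ]
      simp only [G, h_init, zero_div]
    rw [hπ_const ζ hζ]
    exact (div_eq_zero_iff.mp hG_zero).resolve_right (hρpos _).ne'
end

section
/- Let H : ℝ² → ℝ be C³ and let (q,p) : ℝ → ℝ² be differentiable with q′(t) = ∂H/∂p(q(t),p(t)) and p′(t) = −∂H/∂q(q(t),p(t)) for all t. Fix t₀ ∈ ℝ. Then as h → 0 the midpoint DVI (MDVI) residuals are O(h³): (i) q(t₀+h) − q(t₀) − h·∂H/∂p((q(t₀)+q(t₀+h))/2, p(t₀+h/2)) = O(h³); and (ii) p(t₀+h/2) − p(t₀−h/2) + (h/2)·[∂H/∂q((q(t₀)+q(t₀+h))/2, p(t₀+h/2)) + ∂H/∂q((q(t₀−h)+q(t₀))/2, p(t₀−h/2))]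 = O(h³). Hence the midpoint DVI scheme is second-order accurate. -/
open Asymptotics Topology

noncomputable section

/-!
Along the exact flow, which is `C³` because it solves an ODE with a `C²` vector field, each MDVI
residual splits into a classical quadrature error of `q` or `p` (midpoint rule, central
differences), which is `O(h³)`, plus `h` times the difference of a partial derivative of `H`
between the MDVI point `((q(t₀) + q(t₀ + h)) / 2, p(t₀ + h/2))` and the exact state at
`t₀ + h/2` (for the backward `∂H/∂q` term, the same at `-h`). These two points differ only by
the trapezoid-versus-midpoint discrepancy of `q`, which is `O(h²)`, and `∂H` is locally
Lipschitz.
-/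

open Filter Set
open scoped Nat

section Quadrature

variable {E : Type*} [NormedAddCommGroup E] [NormedSpace ℝ E] {f : ℝ → E}

theorem taylor_isBigO_univ {x₀ : ℝ} {n : ℕ} (hf : ContDiff ℝ (n + 1) f) :
    (fun x ↦ f x - taylorWithinEval f n univ x₀ x) =O[𝓝 x₀] fun x ↦ (x - x₀) ^ (n + 1) := by
  have hlo := (taylor_isLittleO_univ (x₀ := x₀) (n := n + 1) (by exact_mod_cast hf)).isBigO
  have hterm : (fun x ↦ (((n + 1 : ℝ) * n !)⁻¹ * (x - x₀) ^ (n + 1)) •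
      iteratedDerivWithin (n + 1) f univ x₀) =O[𝓝 x₀] fun x ↦ (x - x₀) ^ (n + 1) := by
    simpa using ((isBigO_refl (fun x : ℝ ↦ (x - x₀) ^ (n + 1)) (𝓝 x₀)).const_mul_left _).smul
      (isBigO_const_const (iteratedDerivWithin (n + 1) f univ x₀) (one_ne_zero (α := ℝ)) (𝓝 x₀))
  simpa [sub_add_eq_sub_sub] using hlo.add hterm

theorem taylor_isBigO_comp_add_mul {n : ℕ} (hf : ContDiff ℝ (n + 1) f) (t c : ℝ) :
    (fun h ↦ f (t + c * h) - taylorWithinEval f n univ t (t + c * h)) =O[𝓝 0]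
      fun h ↦ h ^ (n + 1) := by
  have hlim : Tendsto (fun h : ℝ ↦ t + c * h) (𝓝 0) (𝓝 t) := by
    simpa using (tendsto_const_nhds (x := t)).add ((tendsto_id (x := 𝓝 (0 : ℝ))).const_mul c)
  refine ((taylor_isBigO_univ hf).comp_tendsto hlim).trans ?_
  simpa [Function.comp_def, mul_pow] using
    (isBigO_refl (fun h : ℝ ↦ h ^ (n + 1)) (𝓝 0)).const_mul_left (c ^ (n + 1))

theorem ContDiff.isBigO_taylor_one (hf : ContDiff ℝ 2 f) (t c : ℝ) :
    (fun h ↦ f (t + c * h) - f t - (c * h) • deriv f t) =O[𝓝 0] fun h ↦ h ^ 2 := by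
  simpa [taylor_within_apply, Finset.sum_range_succ, sub_sub] using
    taylor_isBigO_comp_add_mul (n := 1) hf t c

theorem ContDiff.isBigO_taylor_two (hf : ContDiff ℝ 3 f) (t c : ℝ) :
    (fun h ↦ f (t + c * h) - f t - (c * h) • deriv f t - ((c * h) ^ 2 / 2) • deriv (deriv f) t)
      =O[𝓝 0] fun h ↦ h ^ 3 := by
  have h2 : iteratedDeriv 2 f = deriv (deriv f) := by rw [iteratedDeriv_eq_iterate]; rfl
  simpa [taylor_within_apply, Finset.sum_range_succ, sub_sub, h2, div_eq_inv_mul,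
    one_add_one_eq_two] using taylor_isBigO_comp_add_mul (n := 2) hf t c

theorem Asymptotics.IsBigO.id_smul_pow {g : ℝ → E} {l : Filter ℝ} {n : ℕ}
    (hg : g =O[l] fun h ↦ h ^ n) : (fun h ↦ h • g h) =O[l] fun h ↦ h ^ (n + 1) := by
  refine ((isBigO_refl (fun h : ℝ ↦ h) l).smul hg).congr_right fun h ↦ ?_
  rw [smul_eq_mul, pow_succ']

theorem ContDiff.isBigO_midpoint_rule (hf : ContDiff ℝ 3 f) (t : ℝ) :
    (fun h ↦ f (t + h) - f t - h • deriv f (t + h / 2)) =O[𝓝 0] fun h ↦ h ^ 3 := by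
  have hf' : ContDiff ℝ 2 (deriv f) := hf.iterate_deriv' 2 1
  refine ((hf.isBigO_taylor_two t 1).sub
    (hf'.isBigO_taylor_one t (1 / 2)).id_smul_pow).congr_left fun h ↦ ?_
  simp only [one_mul, one_div, inv_mul_eq_div, smul_sub, smul_smul]
  module

theorem ContDiff.isBigO_central_difference (hf : ContDiff ℝ 3 f) (t : ℝ) :
    (fun h ↦ f (t + h / 2) - f (t - h / 2) - h • deriv f t) =O[𝓝 0] fun h ↦ h ^ 3 := by
  refine ((hf.isBigO_taylor_two t (1 / 2)).sub
    (hf.isBigO_taylor_two t (-1 / 2))).congr_left fun h ↦ ?_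
  rw [show t + -1 / 2 * h = t - h / 2 by ring, show t + 1 / 2 * h = t + h / 2 by ring]
  module

theorem ContDiff.isBigO_second_central_difference (hf : ContDiff ℝ 2 f) (t : ℝ) :
    (fun h ↦ f (t + h / 2) + f (t - h / 2) - (2 : ℝ) • f t) =O[𝓝 0] fun h ↦ h ^ 2 := by
  refine ((hf.isBigO_taylor_one t (1 / 2)).add
    (hf.isBigO_taylor_one t (-1 / 2))).congr_left fun h ↦ ?_
  rw [show t + -1 / 2 * h = t - h / 2 by ring, show t + 1 / 2 * h = t + h / 2 by ring]
  module

theorem ContDiff.isBigO_trapezoid_sub_midpoint (hf : ContDiff ℝ 2 f) (t : ℝ) :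
    (fun h ↦ (2 : ℝ)⁻¹ • (f t + f (t + h)) - f (t + h / 2)) =O[𝓝 0] fun h ↦ h ^ 2 := by
  refine (((hf.isBigO_taylor_one t 1).const_smul_left (2 : ℝ)⁻¹).sub
    (hf.isBigO_taylor_one t (1 / 2))).congr_left fun h ↦ ?_
  rw [Pi.smul_apply, one_mul, show t + 1 / 2 * h = t + h / 2 by ring]
  module

end Quadrature

theorem contDiff_succ_of_hasDerivAt_comp {F : Type*} [NormedAddCommGroup F] [NormedSpace ℝ F]
    {V : F → F} {z : ℝ → F} {n : ℕ} (hV : ContDiff ℝ n V)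
    (hz : ∀ t, HasDerivAt z (V (z t)) t) : ContDiff ℝ (n + 1) z := by
  have hdiff : Differentiable ℝ z := fun t ↦ (hz t).differentiableAt
  have hderiv : deriv z = V ∘ z := funext fun t ↦ (hz t).deriv
  induction n with
  | zero => exact contDiff_one_iff_deriv.2 ⟨hdiff, hderiv ▸ hV.continuous.comp hdiff.continuous⟩
  | succ n ih =>
    refine contDiff_succ_iff_deriv.2 ⟨hdiff, by simp, hderiv ▸ hV.comp ?_⟩
    exact_mod_cast ih hV.of_succ

theorem HasStrictFDerivAt.isBigO_comp_sub_comp {F G : Type*} [NormedAddCommGroup F]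
    [NormedSpace ℝ F] [NormedAddCommGroup G] [NormedSpace ℝ G] {Φ : F → G} {Φ' : F →L[ℝ] G}
    {x : F} (hΦ : HasStrictFDerivAt Φ Φ' x) {α : Type*} {l : Filter α} {u v : α → F}
    (hu : Tendsto u l (𝓝 x)) (hv : Tendsto v l (𝓝 x)) :
    (fun a ↦ Φ (u a) - Φ (v a)) =O[l] fun a ↦ u a - v a :=
  hΦ.isBigO_sub.comp_tendsto (hu.prodMk_nhds hv)

theorem ContDiff.contDiff_Hq {n : ℕ} {H : ℝ × ℝ → ℝ} (hH : ContDiff ℝ (n + 1) H) :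
    ContDiff ℝ n (Hq H) :=
  (hH.fderiv_right le_rfl).clm_apply contDiff_const

theorem ContDiff.contDiff_Hp {n : ℕ} {H : ℝ × ℝ → ℝ} (hH : ContDiff ℝ (n + 1) H) :
    ContDiff ℝ n (Hp H) :=
  (hH.fderiv_right le_rfl).clm_apply contDiff_const

theorem isBigO_comp_mdvi_midpoint_sub {G : Type*} [NormedAddCommGroup G] [NormedSpace ℝ G]
    {Φ : ℝ × ℝ → G} (hΦ : ContDiff ℝ 1 Φ) {q p : ℝ → ℝ} (hq : ContDiff ℝ 2 q)
    (hp : Continuous p) (t₀ : ℝ) :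
    (fun h ↦ Φ ((q t₀ + q (t₀ + h)) / 2, p (t₀ + h / 2)) - Φ (q (t₀ + h / 2), p (t₀ + h / 2)))
      =O[𝓝 0] fun h ↦ h ^ 2 := by
  have hw : Tendsto (fun h ↦ ((q t₀ + q (t₀ + h)) / 2, p (t₀ + h / 2))) (𝓝 0) (𝓝 (q t₀, p t₀)) :=
    Continuous.tendsto' (by fun_prop) _ _ (by simp)
  have hz : Tendsto (fun h ↦ (q (t₀ + h / 2), p (t₀ + h / 2))) (𝓝 0) (𝓝 (q t₀, p t₀)) :=
    Continuous.tendsto' (by fun_prop) _ _ (by simp)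
  refine ((hΦ.contDiffAt.hasStrictFDerivAt one_ne_zero).isBigO_comp_sub_comp hw hz).trans ?_
  refine IsBigO.prod_left ?_ (by simpa using isBigO_zero _ _)
  refine (hq.isBigO_trapezoid_sub_midpoint t₀).congr_left fun h ↦ ?_
  simp only [smul_eq_mul]
  ring

/-- The midpoint DVI scheme is second-order accurate: along an exact solution of
Hamilton's equations the MDVI residuals are `O(h³)` as `h → 0`. -/
theorem mdvi_second_order_accurate
    (H : ℝ × ℝ → ℝ) (hH : ContDiff ℝ 3 H)
    (q p : ℝ → ℝ)
    (hq : ∀ t : ℝ, HasDerivAt q (Hp H (q t, p t)) t)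
    (hp : ∀ t : ℝ, HasDerivAt p (-Hq H (q t, p t)) t)
    (t₀ : ℝ) :
    ((fun h : ℝ =>
        q (t₀ + h) - q t₀ - h * Hp H ((q t₀ + q (t₀ + h)) / 2, p (t₀ + h / 2)))
      =O[𝓝 (0 : ℝ)] fun h : ℝ => h ^ 3)
    ∧ ((fun h : ℝ =>
        p (t₀ + h / 2) - p (t₀ - h / 2)
          + h / 2 * (Hq H ((q t₀ + q (t₀ + h)) / 2, p (t₀ + h / 2))
            + Hq H ((q (t₀ - h) + q t₀) / 2, p (t₀ - h / 2))))
      =O[𝓝 (0 : ℝ)] fun h : ℝ => h ^ 3) := by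
  have hHp : ContDiff ℝ 2 (Hp H) := hH.contDiff_Hp
  have hHq : ContDiff ℝ 2 (Hq H) := hH.contDiff_Hq
  have hz : ContDiff ℝ 3 fun t ↦ (q t, p t) :=
    contDiff_succ_of_hasDerivAt_comp (n := 2) (hHp.prodMk hHq.neg) fun t ↦ (hq t).prodMk (hp t)
  have hq₃ : ContDiff ℝ 3 q := contDiff_fst.comp hz
  have hp₃ : ContDiff ℝ 3 p := contDiff_snd.comp hz
  have hHp_mid := isBigO_comp_mdvi_midpoint_sub (hHp.of_le one_le_two) (hq₃.of_le (by norm_num))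
    hp₃.continuous t₀
  have hHq_mid := isBigO_comp_mdvi_midpoint_sub (hHq.of_le one_le_two) (hq₃.of_le (by norm_num))
    hp₃.continuous t₀
  have hHq_mid_back : (fun h ↦ Hq H ((q (t₀ - h) + q t₀) / 2, p (t₀ - h / 2))
      - Hq H (q (t₀ - h / 2), p (t₀ - h / 2))) =O[𝓝 0] fun h ↦ h ^ 2 := by
    refine (hHq_mid.comp_tendsto (by simpa using tendsto_neg (0 : ℝ))).congr (fun h ↦ ?_)
      fun h ↦ by simp
    simp [add_comm, sub_eq_add_neg, neg_div]
  constructor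
  · refine ((hq₃.isBigO_midpoint_rule t₀).sub hHp_mid.id_smul_pow).congr_left fun h ↦ ?_
    simp only [(hq _).deriv, smul_eq_mul]
    ring
  · refine (((hp₃.isBigO_central_difference t₀).sub
      (((hp₃.iterate_deriv' 2 1).isBigO_second_central_difference t₀).id_smul_pow.const_mul_left
        (1 / 2))).add
      ((hHq_mid.add hHq_mid_back).id_smul_pow.const_mul_left (1 / 2))).congr_left fun h ↦ ?_
    simp only [Function.iterate_one, (hp _).deriv, smul_eq_mul]
    ring
end
end
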